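/- arXiv:2202.10433 — 5 statements merged into one kernel-verified Lean document; each statement's English description precedes it below -/
import Mathlib

section
/- Consider two defenders on the unit-circumference circle with speeds v1 ≥ v2 > 0 and attacks at unit time intervals. If v1 + 3·v2 ≥ 1, then starting from antipodal positions (distance 1/2 apart) and with a one-step horizon, the defenders can thwart every attack in any sequence of attacks. -/
/-- Arc-length distance on the circle of circumference 1, with points
represented by arbitrary reals taken modulo 1. -/
noncomputable def circDist (a b : ℝ) : ℝ :=
  min (Int.fract (a - b)) (1 - Int.fract (a - b))

/-!
Defender 2 takes the attack whenever it is within its reach; otherwise defender 1 takes it.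
Either way the idle defender runs straight away from the attacked point, stopping at its
antipode. The invariant is that the defenders stay at distance at least `1 - v₁ - v₂`: since
the three pairwise distances of points on the circle sum to at most `1`, an attack out of
defender 2's reach is then within `v₁` of defender 1, and `v₁ + 3 v₂ ≥ 1` is exactly what
lets the retreating defender restore the invariant after the move.
-/

lemma circDist_eq_dist (a b : ℝ) :
    circDist a b = dist (a : UnitAddCircle) (b : UnitAddCircle) := by
  rw [dist_eq_norm, ← AddCircle.coe_sub, UnitAddCircle.norm_eq, abs_sub_round_eq_min]
  rfl

lemma circDist_comm (a b : ℝ) : circDist a b = circDist b a := by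
  simp only [circDist_eq_dist, dist_comm]

lemma circDist_self (a : ℝ) : circDist a a = 0 := by
  simp [circDist_eq_dist]

lemma circDist_nonneg (a b : ℝ) : 0 ≤ circDist a b :=
  circDist_eq_dist a b ▸ dist_nonneg

lemma circDist_triangle (a b c : ℝ) : circDist a c ≤ circDist a b + circDist b c := by
  simp only [circDist_eq_dist, dist_triangle]

lemma circDist_eq_abs_sub_round (a b : ℝ) : circDist a b = |a - b - round (a - b)| :=
  (abs_sub_round_eq_min _).symm

lemma circDist_sub_intCast (a b : ℝ) (k : ℤ) : circDist (a - k) b = circDist a b := by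
  simp only [circDist, sub_right_comm a, Int.fract_sub_intCast]

lemma circDist_eq_abs {a b : ℝ} (h : |a - b| ≤ 1 / 2) : circDist a b = |a - b| := by
  rw [circDist_eq_dist, dist_eq_norm, ← AddCircle.coe_sub,
    AddCircle.norm_coe_eq_abs_iff _ one_ne_zero, abs_one]
  exact h

lemma circDist_add_half (a b : ℝ) : circDist a (b + 1 / 2) = 1 / 2 - circDist a b := by
  have h0 := Int.fract_nonneg (a - b)
  have h1 := Int.fract_lt_one (a - b)
  unfold circDist
  rcases lt_or_ge (Int.fract (a - b)) (1 / 2) with h | h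
  · have : Int.fract (a - (b + 1 / 2)) = Int.fract (a - b) + 1 / 2 :=
      Int.fract_eq_iff.2 ⟨by linarith, by linarith, ⌊a - b⌋ - 1, by push_cast [Int.fract]; ring⟩
    rw [this, min_eq_right (by linarith), min_eq_left (by linarith)]
    ring
  · have : Int.fract (a - (b + 1 / 2)) = Int.fract (a - b) - 1 / 2 :=
      Int.fract_eq_iff.2 ⟨by linarith, by linarith, ⌊a - b⌋, by push_cast [Int.fract]; ring⟩
    rw [this, min_eq_left (by linarith), min_eq_right (by linarith)]
    ring

/-- The triangle inequality through the antipode of `b`. -/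
lemma circDist_add_circDist_add_circDist_le_one (a b c : ℝ) :
    circDist a b + circDist b c + circDist a c ≤ 1 := by
  have := circDist_triangle a (b + 1 / 2) c
  rw [circDist_add_half, circDist_comm (b + 1 / 2) c, circDist_add_half, circDist_comm c b] at this
  linarith

/-- Move `x` by `v` directly away from `z`, but not past the antipode of `z`; the sign of
`x - z - round (x - z)` tells on which side of `z` the point `x` lies. -/
noncomputable def retreat (v x z : ℝ) : ℝ :=
  if 0 ≤ x - z - round (x - z) then z + min (1 / 2) (circDist x z + v)
  else z - min (1 / 2) (circDist x z + v)

lemma circDist_retreat {v : ℝ} (hv : 0 ≤ v) (x z : ℝ) :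
    circDist (retreat v x z) z = min (1 / 2) (circDist x z + v) := by
  set t := min (1 / 2) (circDist x z + v)
  have ht : |t| = t := abs_of_nonneg (le_min (by norm_num) (by linarith [circDist_nonneg x z]))
  have hmove (s : ℝ) (hs : |s| = t) : circDist (z + s) z = t := by
    rw [circDist_eq_abs] <;> rw [add_sub_cancel_left, hs]
    exact min_le_left _ _
  unfold retreat
  split_ifs
  · exact hmove t ht
  · exact sub_eq_add_neg z t ▸ hmove (-t) (by rw [abs_neg, ht])

lemma circDist_retreat_le {v : ℝ} (hv : 0 ≤ v) (x z : ℝ) : circDist x (retreat v x z) ≤ v := by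
  set e := x - z - round (x - z)
  set t := min (1 / 2) (circDist x z + v)
  have hxz : circDist x z = |e| := circDist_eq_abs_sub_round x z
  have he : |e| ≤ 1 / 2 := abs_sub_round _
  have het : |e| ≤ t := le_min he (by linarith)
  have ht : t ≤ 1 / 2 := min_le_left _ _
  have htv : t ≤ |e| + v := hxz ▸ min_le_right _ _
  have hmove (s : ℝ) (hs : |e - s| ≤ 1 / 2) : circDist x (z + s) = |e - s| := by
    have : x - round (x - z) - (z + s) = e - s := by ring
    rw [← circDist_sub_intCast x _ (round (x - z)), circDist_eq_abs (this ▸ hs), this]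
  rcases le_or_gt 0 e with h | h
  · have hdist : |e - t| = t - |e| := by
      rw [abs_of_nonneg h, abs_of_nonpos (by linarith [abs_of_nonneg h])]; ring
    rw [show retreat v x z = z + t from if_pos h, hmove t (by linarith [abs_nonneg e])]
    linarith
  · have hdist : |e - -t| = t - |e| := by
      rw [abs_of_neg h, abs_of_nonneg (by linarith [abs_of_neg h])]; ring
    rw [show retreat v x z = z + -t from (if_neg h.not_ge).trans (sub_eq_add_neg z t),
      hmove (-t) (by linarith [abs_nonneg e])]
    linarith

noncomputable def defend (v₁ v₂ : ℝ) (p : ℝ × ℝ) (w : ℝ) : ℝ × ℝ :=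
  if circDist p.2 w ≤ v₂ then (retreat v₁ p.1 w, w) else (w, retreat v₂ p.2 w)

noncomputable def defendRun (v₁ v₂ : ℝ) (p : ℝ × ℝ) (z : ℕ → ℝ) : ℕ → ℝ × ℝ
  | 0 => p
  | t + 1 => defend v₁ v₂ (defendRun v₁ v₂ p z t) (z (t + 1))

section defend

variable {v₁ v₂ : ℝ} {p : ℝ × ℝ}

lemma defend_covers (w : ℝ) :
    circDist (defend v₁ v₂ p w).1 w = 0 ∨ circDist (defend v₁ v₂ p w).2 w = 0 := by
  unfold defend
  split_ifs
  · exact .inr (circDist_self w)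
  · exact .inl (circDist_self w)

lemma circDist_defend_snd_le (h2 : 0 ≤ v₂) (w : ℝ) : circDist p.2 (defend v₁ v₂ p w).2 ≤ v₂ := by
  unfold defend
  split_ifs with hreach
  · exact hreach
  · exact circDist_retreat_le h2 p.2 w

lemma circDist_defend_fst_le (h1 : 0 ≤ v₁) (hp : 1 - v₁ - v₂ ≤ circDist p.1 p.2) (w : ℝ) :
    circDist p.1 (defend v₁ v₂ p w).1 ≤ v₁ := by
  unfold defend
  split_ifs with hreach
  · exact circDist_retreat_le h1 p.1 w
  · linarith [circDist_add_circDist_add_circDist_le_one p.1 p.2 w]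

lemma le_circDist_defend (h21 : v₂ ≤ v₁) (h2 : 0 ≤ v₂) (h : 1 ≤ v₁ + 3 * v₂)
    (hp : 1 - v₁ - v₂ ≤ circDist p.1 p.2) (w : ℝ) :
    1 - v₁ - v₂ ≤ circDist (defend v₁ v₂ p w).1 (defend v₁ v₂ p w).2 := by
  unfold defend
  split_ifs with hreach
  · rw [circDist_retreat (h2.trans h21)]
    refine le_min (by linarith) ?_
    linarith [circDist_triangle p.1 w p.2, circDist_comm w p.2]
  · rw [circDist_comm, circDist_retreat h2]
    exact le_min (by linarith) (by linarith)

end defend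

/-- Two defenders with speeds `v₁ ≥ v₂ > 0` on the unit circle, attacks at unit
time intervals. If `v₁ + 3 v₂ ≥ 1` then, starting from antipodal positions and
using only a one-step horizon (the next position may depend only on the current
positions and the next attack), the defenders can thwart every attack of any
sequence of attacks. -/
theorem perfect_defense (v₁ v₂ : ℝ) (h21 : v₂ ≤ v₁) (h2 : 0 < v₂)
    (h : 1 ≤ v₁ + 3 * v₂) (p₁ p₂ : ℝ) (hp : circDist p₁ p₂ = 1/2) :
    ∃ σ : ℝ × ℝ → ℝ → ℝ × ℝ,
      ∀ z : ℕ → ℝ,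
        ∃ d : ℕ → ℝ × ℝ,
          d 0 = (p₁, p₂) ∧
          (∀ t : ℕ, d (t + 1) = σ (d t) (z (t + 1))) ∧
          (∀ t : ℕ, circDist (d t).1 (d (t + 1)).1 ≤ v₁) ∧
          (∀ t : ℕ, circDist (d t).2 (d (t + 1)).2 ≤ v₂) ∧
          (∀ t : ℕ, circDist (d (t + 1)).1 (z (t + 1)) = 0 ∨
            circDist (d (t + 1)).2 (z (t + 1)) = 0) := by
  refine ⟨defend v₁ v₂, fun z => ⟨defendRun v₁ v₂ (p₁, p₂) z, rfl, fun _ => rfl, ?_⟩⟩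
  have hsep (t : ℕ) : 1 - v₁ - v₂ ≤
      circDist (defendRun v₁ v₂ (p₁, p₂) z t).1 (defendRun v₁ v₂ (p₁, p₂) z t).2 := by
    induction t with
    | zero => show 1 - v₁ - v₂ ≤ circDist p₁ p₂; linarith
    | succ t ih => exact le_circDist_defend h21 h2.le h ih _
  exact ⟨fun t => circDist_defend_fst_le (by linarith) (hsep t) _,
    fun t => circDist_defend_snd_le h2.le _, fun t => defend_covers _⟩
end

section
/- On the unit circle, suppose v1 < 1/2, v1 + 3·v2 < 1, and 0 < ε < min((1-(v1+3v2))/2, (1/2-v1)/2). Place the slower defender at 1/4 at time 0 and the faster defender anywhere; then the attack at position 1/4 - v2 - ε at time 1 is unreachable by the slower defender, and the subsequent attack at 1/4 - v1 - v2 - 2ε at time 2 is unreachable by both defenders: the faster defender (which must take the time-1 attack) cannot reach it in one step, and the slower defender cannot reach it in two steps from 1/4, since (v1+v2+2ε) + 2v2 < 1. -/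
theorem circDist_eq_min_of_sub_mem_Ico {a b : ℝ} (h₀ : 0 ≤ a - b) (h₁ : a - b < 1) :
    circDist a b = min (a - b) (1 - (a - b)) := by
  rw [circDist, Int.fract_eq_self.mpr ⟨h₀, h₁⟩]

theorem lt_circDist_of_lt_sub {x a b : ℝ} (hx : 0 ≤ x) (h : x < a - b) (h' : x < 1 - (a - b)) :
    x < circDist a b := by
  rw [circDist_eq_min_of_sub_mem_Ico (by linarith) (by linarith)]
  exact lt_min h h'

theorem breach_sequence_general (v₁ v₂ ε : ℝ) (h21 : v₂ ≤ v₁) (h2 : 0 < v₂)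
    (hε : 0 < ε)
    (hε' : ε < min ((1 - (v₁ + 3 * v₂)) / 2) ((1/2 - v₁) / 2)) :
    v₂ < circDist (1/4) (1/4 - v₂ - ε) ∧
    v₁ < circDist (1/4 - v₂ - ε) (1/4 - v₁ - v₂ - 2 * ε) ∧
    2 * v₂ < circDist (1/4) (1/4 - v₁ - v₂ - 2 * ε) := by
  obtain ⟨hε_sum, hε_half⟩ := lt_min_iff.mp hε'
  refine ⟨lt_circDist_of_lt_sub h2.le ?_ ?_, lt_circDist_of_lt_sub (h2.le.trans h21) ?_ ?_,
    lt_circDist_of_lt_sub (by positivity) ?_ ?_⟩ <;> linarith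

/-- For speeds `v₁ ≥ v₂ > 0` with `v₁ < 1/2` and `v₁ + 3 v₂ < 1`, and
`0 < ε < min ((1-(v₁+3v₂))/2) ((1/2-v₁)/2)`: with the slower defender at `1/4`
at time 0, the attack at `1/4 - v₂ - ε` (time 1) is out of the slower
defender's one-step reach; the faster defender, which must thwart it, cannot
reach the subsequent attack at `1/4 - v₁ - v₂ - 2ε` (time 2) in one step from
`1/4 - v₂ - ε`; and the slower defender cannot reach that attack in two steps
from `1/4`. -/
theorem breach_sequence (v₁ v₂ ε : ℝ) (h21 : v₂ ≤ v₁) (h2 : 0 < v₂)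
    (h1 : v₁ < 1/2) (hsum : v₁ + 3 * v₂ < 1) (hε : 0 < ε)
    (hε' : ε < min ((1 - (v₁ + 3 * v₂)) / 2) ((1/2 - v₁) / 2)) :
    v₂ < circDist (1/4) (1/4 - v₂ - ε) ∧
    v₁ < circDist (1/4 - v₂ - ε) (1/4 - v₁ - v₂ - 2 * ε) ∧
    2 * v₂ < circDist (1/4) (1/4 - v₁ - v₂ - 2 * ε) :=
  breach_sequence_general v₁ v₂ ε h21 h2 hε hε'
end

section
/- A sequence of attacks (z_1,...,z_n) at unit time intervals can be fully defended by a team of defenders if and only if the reversed sequence (z_n,...,z_1) can be fully defended by the same team. -/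
/-- Defenders with speeds `v` (moving at most `v i` per unit time, starting
anywhere) can thwart every attack of the sequence `z`, where attack `j`
occurs at position `z j` at time `j + 1`. -/
def FullyDefended {X : Type*} [MetricSpace X] {m n : ℕ} (v : Fin m → ℝ)
    (z : Fin n → X) : Prop :=
  ∃ traj : Fin m → ℕ → X,
    (∀ (i : Fin m) (t : ℕ), dist (traj i t) (traj i (t + 1)) ≤ v i) ∧
    (∀ j : Fin n, ∃ i : Fin m, traj i (j + 1) = z j)

/-- For `t ≥ N` the truncated `N - t` is `0`, so the reversed path rests at `f 0`. -/
theorem dist_sub_sub_succ_le {X : Type*} [PseudoMetricSpace X] {f : ℕ → X} {c : ℝ}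
    (hf : ∀ t, dist (f t) (f (t + 1)) ≤ c) (N t : ℕ) :
    dist (f (N - t)) (f (N - (t + 1))) ≤ c := by
  rcases lt_or_ge t N with ht | ht
  · have hNt : N - t = N - (t + 1) + 1 := by omega
    rw [hNt, dist_comm]
    exact hf _
  · rw [Nat.sub_eq_zero_of_le ht, Nat.sub_eq_zero_of_le (Nat.le_succ_of_le ht), dist_self]
    exact dist_nonneg.trans (hf 0)

theorem FullyDefended.reverse {X : Type*} [MetricSpace X] {m n : ℕ} {v : Fin m → ℝ}
    {z : Fin n → X} (h : FullyDefended v z) : FullyDefended v (fun j => z j.rev) := by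
  obtain ⟨traj, hstep, hhit⟩ := h
  refine ⟨fun i t => traj i (n + 1 - t), fun i => dist_sub_sub_succ_le (hstep i) (n + 1), ?_⟩
  intro j
  obtain ⟨i, hi⟩ := hhit j.rev
  refine ⟨i, ?_⟩
  have htime : n + 1 - (j + 1) = j.rev + 1 := by simp only [Fin.val_rev]; omega
  simpa only [htime] using hi

/-- A sequence of attacks at unit time intervals can be fully defended iff the
reversed sequence can be fully defended by the same team. -/
theorem defend_iff_defend_reverse {X : Type*} [MetricSpace X] {m n : ℕ}
    (v : Fin m → ℝ) (z : Fin n → X) :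
    FullyDefended v z ↔ FullyDefended v (fun j => z j.rev) :=
  ⟨FullyDefended.reverse, fun h => by simpa only [Fin.rev_rev] using h.reverse⟩
end

section
/- In a directed acyclic graph G on n vertices, the minimum number of vertex-disjoint directed paths needed to cover all vertices equals n minus the size of a maximum matching in the bipartite graph formed by splitting each vertex u into u_out and u_in, with an edge (u_out, w_in) for each directed edge u→w of G. -/
section ChainFrom

variable {V : Type*}

def chainFrom (nxt : V → Option V) : ℕ → V → List V
  | 0, _ => []
  | f + 1, v =>
    match nxt v with
    | none => [v]
    | some w => v :: chainFrom nxt f w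

lemma chainFrom_zero (nxt : V → Option V) (v : V) : chainFrom nxt 0 v = [] := rfl

lemma chainFrom_succ_none {nxt : V → Option V} {v : V} (h : nxt v = none) (f : ℕ) :
    chainFrom nxt (f + 1) v = [v] := by simp [chainFrom, h]

lemma chainFrom_succ_some {nxt : V → Option V} {v w : V} (h : nxt v = some w) (f : ℕ) :
    chainFrom nxt (f + 1) v = v :: chainFrom nxt f w := by simp [chainFrom, h]

lemma chainFrom_ne_nil {nxt : V → Option V} {f : ℕ} (v : V) (hf : f ≠ 0) :
    chainFrom nxt f v ≠ [] := by
  obtain ⟨f, rfl⟩ := Nat.exists_eq_succ_of_ne_zero hf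
  cases h : nxt v with
  | none => rw [chainFrom_succ_none h]; simp
  | some w => rw [chainFrom_succ_some h]; simp

lemma chainFrom_head? {nxt : V → Option V} {f : ℕ} (v : V) (hf : f ≠ 0) :
    (chainFrom nxt f v).head? = some v := by
  obtain ⟨f, rfl⟩ := Nat.exists_eq_succ_of_ne_zero hf
  cases h : nxt v with
  | none => rw [chainFrom_succ_none h]; rfl
  | some w => rw [chainFrom_succ_some h]; rfl

lemma chainFrom_mem_self {nxt : V → Option V} {f : ℕ} (v : V) (hf : f ≠ 0) :
    v ∈ chainFrom nxt f v := by
  obtain ⟨f, rfl⟩ := Nat.exists_eq_succ_of_ne_zero hf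
  cases h : nxt v with
  | none => rw [chainFrom_succ_none h]; simp
  | some w => rw [chainFrom_succ_some h]; simp

lemma chainFrom_chain' (nxt : V → Option V) (f : ℕ) (v : V) :
    (chainFrom nxt f v).Chain' (fun a b => nxt a = some b) := by
  induction f generalizing v with
  | zero => simp [chainFrom_zero, List.Chain']
  | succ f ih =>
    cases h : nxt v with
    | none => rw [chainFrom_succ_none h]; simp [List.Chain']
    | some w =>
      rw [chainFrom_succ_some h]
      refine List.isChain_cons.mpr ⟨?_, ih w⟩
      intro y hy
      cases f with
      | zero => simp [chainFrom_zero] at hy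
      | succ f =>
        rw [chainFrom_head? w (Nat.succ_ne_zero f)] at hy
        simp at hy
        rwa [hy] at h

def iterN (nxt : V → Option V) : ℕ → V → Option V
  | 0, v => some v
  | k + 1, v =>
    match nxt v with
    | none => none
    | some w => iterN nxt k w

lemma iterN_zero (nxt : V → Option V) (v : V) : iterN nxt 0 v = some v := rfl

lemma iterN_succ_none {nxt : V → Option V} {v : V} (h : nxt v = none) (k : ℕ) :
    iterN nxt (k + 1) v = none := by simp [iterN, h]

lemma iterN_succ_some {nxt : V → Option V} {v w : V} (h : nxt v = some w) (k : ℕ) :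
    iterN nxt (k + 1) v = iterN nxt k w := by simp [iterN, h]

lemma mem_chainFrom_iff {nxt : V → Option V} {f : ℕ} {v x : V} :
    x ∈ chainFrom nxt f v ↔ ∃ k, k + 1 ≤ f ∧ iterN nxt k v = some x := by
  induction f generalizing v with
  | zero => simp [chainFrom_zero]
  | succ f ih =>
    constructor
    · intro hx
      cases h : nxt v with
      | none =>
        rw [chainFrom_succ_none h] at hx
        simp at hx
        exact ⟨0, by omega, by rw [hx, iterN_zero]⟩
      | some w =>
        rw [chainFrom_succ_some h] at hx
        rcases List.mem_cons.mp hx with rfl | hx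
        · exact ⟨0, by omega, iterN_zero nxt x⟩
        · obtain ⟨k, hk, hit⟩ := ih.mp hx
          exact ⟨k + 1, by omega, by rw [iterN_succ_some h]; exact hit⟩
    · rintro ⟨k, hk, hit⟩
      cases k with
      | zero =>
        rw [iterN_zero] at hit
        obtain rfl : v = x := by simpa using hit
        exact chainFrom_mem_self v (Nat.succ_ne_zero f)
      | succ k =>
        cases h : nxt v with
        | none => rw [iterN_succ_none h] at hit; simp at hit
        | some w =>
          rw [iterN_succ_some h] at hit
          rw [chainFrom_succ_some h]
          exact List.mem_cons_of_mem v (ih.mpr ⟨k, by omega, hit⟩)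

lemma iterN_succ_last {nxt : V → Option V} :
    ∀ (k : ℕ) (v x : V), iterN nxt (k + 1) v = some x ↔
      ∃ u, iterN nxt k v = some u ∧ nxt u = some x := by
  intro k
  induction k with
  | zero =>
    intro v x
    cases h : nxt v with
    | none => rw [iterN_succ_none h]; simp [iterN_zero, h]
    | some w =>
      rw [iterN_succ_some h, iterN_zero]
      simp only [iterN_zero, Option.some_inj]
      constructor
      · rintro rfl; exact ⟨v, rfl, h⟩
      · rintro ⟨u, rfl, hu⟩; rw [h] at hu; simpa using hu
  | succ k ih =>
    intro v x
    cases h : nxt v with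
    | none =>
      rw [iterN_succ_none h]
      simp only [iterN_succ_none h k]
      simp
    | some w =>
      rw [iterN_succ_some h, ih w x]
      constructor
      · rintro ⟨u, hu1, hu2⟩; exact ⟨u, by rw [iterN_succ_some h]; exact hu1, hu2⟩
      · rintro ⟨u, hu1, hu2⟩; rw [iterN_succ_some h] at hu1; exact ⟨u, hu1, hu2⟩

lemma chainFrom_length_le (nxt : V → Option V) (f : ℕ) (v : V) :
    (chainFrom nxt f v).length ≤ f := by
  induction f generalizing v with
  | zero => simp [chainFrom_zero]
  | succ f ih =>
    cases h : nxt v with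
    | none => rw [chainFrom_succ_none h]; simp
    | some w => rw [chainFrom_succ_some h]; simpa using ih w

lemma chainFrom_step_mem {nxt : V → Option V} {f : ℕ} {v u x : V}
    (hu : u ∈ chainFrom nxt f v) (hx : nxt u = some x) :
    x ∈ chainFrom nxt f v ∨ (chainFrom nxt f v).length = f := by
  induction f generalizing v with
  | zero => simp [chainFrom_zero] at hu
  | succ f ih =>
    cases h : nxt v with
    | none =>
      rw [chainFrom_succ_none h] at hu ⊢
      simp at hu
      subst hu
      rw [h] at hx
      simp at hx
    | some w =>
      rw [chainFrom_succ_some h] at hu ⊢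
      rcases List.mem_cons.mp hu with rfl | hu
      · have hwx : w = x := by rw [h] at hx; simpa using hx
        subst hwx
        cases f with
        | zero => right; simp [chainFrom_zero]
        | succ f =>
          exact Or.inl (List.mem_cons_of_mem _ (chainFrom_mem_self w (Nat.succ_ne_zero f)))
      · rcases ih hu with hmem | hlen
        · exact Or.inl (List.mem_cons_of_mem _ hmem)
        · right; simp [hlen]

end ChainFrom
section Helpers

variable {V : Type*} {r : V → V → Prop}

lemma nodup_of_chain'_acyc (hacyc : ∀ v : V, ¬ Relation.TransGen r v v)
    {l : List V} (h : l.Chain' r) : l.Nodup := by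
  have h2 : l.Chain' (Relation.TransGen r) :=
    List.IsChain.imp (fun a b hab => Relation.TransGen.single hab) h
  have hp := List.isChain_iff_pairwise.mp h2
  have key : ∀ {a b : V}, Relation.TransGen r a b → a ≠ b :=
    fun hab e => hacyc _ (by rwa [e] at hab)
  exact hp.imp key

lemma chain'_rel_zip {l : List V} (h : l.Chain' r) :
    ∀ p ∈ l.zip l.tail, r p.1 p.2 := by
  induction l with
  | nil => simp
  | cons a t ih =>
    cases t with
    | nil => simp
    | cons b t' =>
      intro p hp
      simp only [List.Chain', List.isChain_cons_cons] at h
      simp only [List.tail_cons, List.zip_cons_cons, List.mem_cons] at hp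
      rcases hp with rfl | hp
      · exact h.1
      · exact ih h.2 p hp

lemma zip_tail_fst_inj {l : List V} (hl : l.Nodup) :
    ∀ p ∈ l.zip l.tail, ∀ q ∈ l.zip l.tail, p.1 = q.1 → p = q := by
  induction l with
  | nil => simp
  | cons a t ih =>
    cases t with
    | nil => simp
    | cons b t' =>
      intro p hp q hq hpq
      simp only [List.tail_cons, List.zip_cons_cons, List.mem_cons] at hp hq
      have hnd : (b :: t').Nodup := hl.of_cons
      have hna : a ∉ b :: t' := by
        intro hmem; exact (List.nodup_cons.mp hl).1 hmem
      rcases hp with rfl | hp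
      · rcases hq with rfl | hq
        · rfl
        · have h1 := (List.of_mem_zip hq).1; rw [← hpq] at h1; exact absurd h1 hna
      · rcases hq with rfl | hq
        · have h1 := (List.of_mem_zip hp).1; rw [hpq] at h1; exact absurd h1 hna
        · exact ih hnd p hp q hq hpq

lemma zip_tail_snd_inj {l : List V} (hl : l.Nodup) :
    ∀ p ∈ l.zip l.tail, ∀ q ∈ l.zip l.tail, p.2 = q.2 → p = q := by
  induction l with
  | nil => simp
  | cons a t ih =>
    cases t with
    | nil => simp
    | cons b t' =>
      intro p hp q hq hpq
      simp only [List.tail_cons, List.zip_cons_cons, List.mem_cons] at hp hq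
      have hnd : (b :: t').Nodup := hl.of_cons
      have hnb : b ∉ t' := (List.nodup_cons.mp hnd).1
      have hsnd : ∀ x ∈ (b :: t').zip t', x.2 ∈ t' := fun x hx => (List.of_mem_zip hx).2
      rcases hp with rfl | hp
      · rcases hq with rfl | hq
        · rfl
        · have h1 := hsnd q hq; rw [← hpq] at h1; exact absurd h1 hnb
      · rcases hq with rfl | hq
        · have h1 := hsnd p hp; rw [hpq] at h1; exact absurd h1 hnb
        · exact ih hnd p hp q hq hpq

lemma zip_tail_nodup {l : List V} (hl : l.Nodup) : (l.zip l.tail).Nodup := by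
  induction l with
  | nil => simp
  | cons a t ih =>
    cases t with
    | nil => simp
    | cons b t' =>
      simp only [List.tail_cons, List.zip_cons_cons]
      refine List.nodup_cons.mpr ⟨?_, ih hl.of_cons⟩
      intro hmem
      exact (List.nodup_cons.mp hl).1 (List.of_mem_zip hmem).1

lemma zip_tail_length {l : List V} : (l.zip l.tail).length = l.length - 1 := by
  rw [List.length_zip, List.length_tail]
  omega

end Helpers
section StartUnique

variable {V : Type*}

lemma iterN_start_unique {nxt : V → Option V}
    (hinj : ∀ u u' x, nxt u = some x → nxt u' = some x → u = u')
    {s s' : V} (hs : ∀ u, nxt u ≠ some s) (hs' : ∀ u, nxt u ≠ some s') :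
    ∀ (k : ℕ) (j : ℕ) (x : V), iterN nxt k s = some x → iterN nxt j s' = some x →
      s = s' := by
  intro k
  induction k with
  | zero =>
    intro j x h1 h2
    rw [iterN_zero] at h1
    obtain rfl : s = x := by simpa using h1
    cases j with
    | zero =>
      rw [iterN_zero] at h2
      simpa using h2.symm
    | succ j =>
      obtain ⟨u, _, hu2⟩ := (iterN_succ_last j s' s).mp h2
      exact absurd hu2 (hs u)
  | succ k ih =>
    intro j x h1 h2
    obtain ⟨u, hu1, hu2⟩ := (iterN_succ_last k s x).mp h1
    cases j with
    | zero =>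
      rw [iterN_zero] at h2
      obtain rfl : s' = x := by simpa using h2
      exact absurd hu2 (hs' u)
    | succ j =>
      obtain ⟨u', hu1', hu2'⟩ := (iterN_succ_last j s' x).mp h2
      obtain rfl : u = u' := hinj u u' x hu2 hu2'
      exact ih j u hu1 hu1'

end StartUnique

lemma cover_of_matching {V : Type*} [Fintype V] {r : V → V → Prop}
    (hacyc : ∀ v : V, ¬ Relation.TransGen r v v)
    {M : Finset (V × V)}
    (hr : ∀ p ∈ M, r p.1 p.2)
    (hfst : ∀ p ∈ M, ∀ q ∈ M, p.1 = q.1 → p = q)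
    (hsnd : ∀ p ∈ M, ∀ q ∈ M, p.2 = q.2 → p = q) :
    ∃ P : Finset (List V), P.card = Fintype.card V - M.card ∧
      (∀ l ∈ P, l ≠ [] ∧ l.Chain' r ∧ l.Nodup) ∧
      (∀ l ∈ P, ∀ l' ∈ P, l ≠ l' → ∀ x, x ∈ l → x ∉ l') ∧
      (∀ v : V, ∃ l ∈ P, v ∈ l) := by
  classical
  set N : ℕ := Fintype.card V + 1 with hN
  have hN0 : N ≠ 0 := by omega
  set nxt : V → Option V := fun v => if h : ∃ w, (v, w) ∈ M then some h.choose else none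
    with hnxtdef
  have hnxt : ∀ v w, nxt v = some w ↔ (v, w) ∈ M := by
    intro v w
    constructor
    · intro h
      by_cases hex : ∃ w, (v, w) ∈ M
      · rw [hnxtdef] at h
        simp only [dif_pos hex, Option.some_inj] at h
        rw [← h]
        exact hex.choose_spec
      · rw [hnxtdef] at h
        simp only [dif_neg hex] at h
        exact absurd h (by simp)
    · intro h
      have hex : ∃ w, (v, w) ∈ M := ⟨w, h⟩
      rw [hnxtdef]
      simp only [dif_pos hex, Option.some_inj]
      have := hfst _ hex.choose_spec _ h rfl
      simpa using congrArg Prod.snd this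
  have hinj : ∀ u u' x, nxt u = some x → nxt u' = some x → u = u' := by
    intro u u' x h1 h2
    have := hsnd _ ((hnxt u x).mp h1) _ ((hnxt u' x).mp h2) rfl
    simpa using congrArg Prod.fst this
  -- basic properties of chains
  have hchain : ∀ v : V, (chainFrom nxt N v).Chain' r := by
    intro v
    exact (chainFrom_chain' nxt N v).imp fun {a b} h => hr _ ((hnxt a b).mp h)
  have hnodup : ∀ v : V, (chainFrom nxt N v).Nodup :=
    fun v => nodup_of_chain'_acyc hacyc (hchain v)
  have hlenle : ∀ v : V, (chainFrom nxt N v).length ≤ Fintype.card V :=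
    fun v => (hnodup v).length_le_card
  -- starts
  set isStart : V → Prop := fun v => v ∉ M.image Prod.snd with hisdef
  have hstart_nxt : ∀ v, isStart v → ∀ u, nxt u ≠ some v := by
    intro v hv u hu
    exact hv (Finset.mem_image.mpr ⟨(u, v), (hnxt u v).mp hu, rfl⟩)
  have hnxt_start : ∀ v, (∀ u, nxt u ≠ some v) → isStart v := by
    intro v hv
    rw [hisdef]
    simp only [Finset.mem_image, not_exists]
    rintro p ⟨hp, hp2⟩
    exact hv p.1 ((hnxt p.1 v).mpr (by rw [← hp2]; exact hp))
  set P : Finset (List V) :=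
    (Finset.univ.filter isStart).image (chainFrom nxt N) with hPdef
  -- membership in chains propagates along nxt
  have hstep : ∀ (s u x : V), u ∈ chainFrom nxt N s → nxt u = some x →
      x ∈ chainFrom nxt N s := by
    intro s u x hu hx
    rcases chainFrom_step_mem hu hx with h | h
    · exact h
    · have := hlenle s
      omega
  -- covering
  have hwf : WellFounded (Relation.TransGen r) := by
    haveI : IsIrrefl V (Relation.TransGen r) := ⟨hacyc⟩
    exact Finite.wellFounded_of_trans_of_irrefl _
  have hcover : ∀ x : V, ∃ s : V, isStart s ∧ x ∈ chainFrom nxt N s := by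
    intro x
    refine hwf.induction (C := fun x => ∃ s : V, isStart s ∧ x ∈ chainFrom nxt N s) x ?_
    intro x ih
    by_cases hx : isStart x
    · exact ⟨x, hx, chainFrom_mem_self x hN0⟩
    · have : ∃ u, nxt u = some x := by
        rw [hisdef] at hx
        simp only [not_not, Finset.mem_image] at hx
        obtain ⟨p, hp, hp2⟩ := hx
        exact ⟨p.1, (hnxt p.1 x).mpr (by rw [← hp2]; exact hp)⟩
      obtain ⟨u, hu⟩ := this
      have htg : Relation.TransGen r u x := Relation.TransGen.single (hr _ ((hnxt u x).mp hu))
      obtain ⟨s, hs, hmem⟩ := ih u htg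
      exact ⟨s, hs, hstep s u x hmem hu⟩
  -- disjointness of chains from different starts
  have hdisj : ∀ s s' : V, isStart s → isStart s' → s ≠ s' →
      ∀ x, x ∈ chainFrom nxt N s → x ∉ chainFrom nxt N s' := by
    intro s s' hs hs' hne x hx hx'
    obtain ⟨k, _, hk⟩ := mem_chainFrom_iff.mp hx
    obtain ⟨j, _, hj⟩ := mem_chainFrom_iff.mp hx'
    exact hne (iterN_start_unique hinj (hstart_nxt s hs) (hstart_nxt s' hs') k j x hk hj)
  -- injectivity of s ↦ chainFrom nxt N s
  have hinjchain : ∀ s s' : V, chainFrom nxt N s = chainFrom nxt N s' → s = s' := by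
    intro s s' h
    have h1 := chainFrom_head? (nxt := nxt) s hN0
    have h2 := chainFrom_head? (nxt := nxt) s' hN0
    rw [h, h2] at h1
    simpa using h1.symm
  refine ⟨P, ?_, ?_, ?_, ?_⟩
  · rw [hPdef, Finset.card_image_of_injOn (fun s _ s' _ h => hinjchain s s' h)]
    have : Finset.univ.filter isStart = Finset.univ \ M.image Prod.snd := by
      apply Finset.ext
      intro v
      simp [hisdef, Finset.mem_filter, Finset.mem_sdiff]
    rw [this, Finset.card_sdiff_of_subset (Finset.subset_univ _), Finset.card_univ,
      Finset.card_image_of_injOn hsnd]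
  · intro l hl
    obtain ⟨s, _, rfl⟩ := Finset.mem_image.mp hl
    exact ⟨chainFrom_ne_nil s hN0, hchain s, hnodup s⟩
  · intro l hl l' hl' hne x hx hx'
    obtain ⟨s, hs, rfl⟩ := Finset.mem_image.mp hl
    obtain ⟨s', hs', rfl⟩ := Finset.mem_image.mp hl'
    have hss : s ≠ s' := fun h => hne (by rw [h])
    exact hdisj s s' (Finset.mem_filter.mp hs).2 (Finset.mem_filter.mp hs').2 hss x hx hx'
  · intro v
    obtain ⟨s, hs, hmem⟩ := hcover v
    exact ⟨chainFrom nxt N s,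
      Finset.mem_image.mpr ⟨s, Finset.mem_filter.mpr ⟨Finset.mem_univ s, hs⟩, rfl⟩, hmem⟩
lemma matching_of_cover {V : Type*} [Fintype V] {r : V → V → Prop}
    {P : Finset (List V)}
    (h1 : ∀ l ∈ P, l ≠ [] ∧ l.Chain' r ∧ l.Nodup)
    (h2 : ∀ l ∈ P, ∀ l' ∈ P, l ≠ l' → ∀ x, x ∈ l → x ∉ l')
    (h3 : ∀ v : V, ∃ l ∈ P, v ∈ l) :
    ∃ M : Finset (V × V), M.card = Fintype.card V - P.card ∧
      (∀ p ∈ M, r p.1 p.2) ∧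
      (∀ p ∈ M, ∀ q ∈ M, p.1 = q.1 → p = q) ∧
      (∀ p ∈ M, ∀ q ∈ M, p.2 = q.2 → p = q) := by
  classical
  refine ⟨P.biUnion (fun l => (l.zip l.tail).toFinset), ?_, ?_, ?_, ?_⟩
  · -- cardinality
    have hdisj : ∀ l ∈ P, ∀ l' ∈ P, l ≠ l' →
        Disjoint (l.zip l.tail).toFinset (l'.zip l'.tail).toFinset := by
      intro l hl l' hl' hne
      rw [Finset.disjoint_left]
      intro p hp hp'
      rw [List.mem_toFinset] at hp hp'
      exact h2 l hl l' hl' hne p.1 (List.of_mem_zip hp).1 (List.of_mem_zip hp').1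
    rw [Finset.card_biUnion hdisj]
    have hcard : ∀ l ∈ P, (l.zip l.tail).toFinset.card = l.length - 1 := by
      intro l hl
      rw [List.toFinset_card_of_nodup (zip_tail_nodup (h1 l hl).2.2), zip_tail_length]
    have hvdisj : ∀ l ∈ P, ∀ l' ∈ P, l ≠ l' → Disjoint l.toFinset l'.toFinset := by
      intro l hl l' hl' hne
      rw [Finset.disjoint_left]
      intro x hx hx'
      exact h2 l hl l' hl' hne x (List.mem_toFinset.mp hx) (List.mem_toFinset.mp hx')
    have huniv : P.biUnion (fun l => l.toFinset) = Finset.univ := by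
      apply Finset.eq_univ_of_forall
      intro v
      obtain ⟨l, hl, hv⟩ := h3 v
      exact Finset.mem_biUnion.mpr ⟨l, hl, List.mem_toFinset.mpr hv⟩
    have hn : Fintype.card V = ∑ l ∈ P, l.length := by
      rw [← Finset.card_univ, ← huniv, Finset.card_biUnion hvdisj]
      exact Finset.sum_congr rfl fun l hl => List.toFinset_card_of_nodup (h1 l hl).2.2
    rw [Finset.sum_congr rfl hcard, hn]
    have hlen1 : ∀ l ∈ P, 1 ≤ l.length := by
      intro l hl
      exact List.length_pos_iff.mpr (h1 l hl).1
    have key : ∑ x ∈ P, (x.length - 1) + P.card = ∑ l ∈ P, l.length := by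
      rw [Finset.card_eq_sum_ones, ← Finset.sum_add_distrib]
      exact Finset.sum_congr rfl fun l hl => by have := hlen1 l hl; omega
    omega
  · intro p hp
    obtain ⟨l, hl, hpl⟩ := Finset.mem_biUnion.mp hp
    exact chain'_rel_zip (h1 l hl).2.1 p (List.mem_toFinset.mp hpl)
  · intro p hp q hq hpq
    obtain ⟨l, hl, hpl⟩ := Finset.mem_biUnion.mp hp
    obtain ⟨l', hl', hql⟩ := Finset.mem_biUnion.mp hq
    rw [List.mem_toFinset] at hpl hql
    have hll : l = l' := by
      by_contra hne
      exact h2 l hl l' hl' hne p.1 (List.of_mem_zip hpl).1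
        (hpq ▸ (List.of_mem_zip hql).1)
    subst hll
    exact zip_tail_fst_inj (h1 l hl).2.2 p hpl q hql hpq
  · intro p hp q hq hpq
    obtain ⟨l, hl, hpl⟩ := Finset.mem_biUnion.mp hp
    obtain ⟨l', hl', hql⟩ := Finset.mem_biUnion.mp hq
    rw [List.mem_toFinset] at hpl hql
    have hll : l = l' := by
      by_contra hne
      have hm1 : p.2 ∈ l := List.mem_of_mem_tail (List.of_mem_zip hpl).2
      have hm2 : q.2 ∈ l' := List.mem_of_mem_tail (List.of_mem_zip hql).2
      exact h2 l hl l' hl' hne p.2 hm1 (hpq ▸ hm2)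
    subst hll
    exact zip_tail_snd_inj (h1 l hl).2.2 p hpl q hql hpq

/-- In a finite DAG (relation `r` with no directed cycles), the minimum number
of vertex-disjoint directed paths covering all vertices equals `n` minus the
size of a maximum matching in the associated bipartite graph (parts `u_out`,
`w_in`, with an edge `(u_out, w_in)` for each edge `u → w`; a matching is a set
of edges of `G` no two of which share a tail or share a head). -/
theorem dag_path_cover_eq (V : Type*) [Fintype V] (r : V → V → Prop)
    (hacyc : ∀ v : V, ¬ Relation.TransGen r v v) :
    sInf {k : ℕ | ∃ P : Finset (List V), P.card = k ∧
        (∀ l ∈ P, l ≠ [] ∧ l.Chain' r ∧ l.Nodup) ∧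
        (∀ l ∈ P, ∀ l' ∈ P, l ≠ l' → ∀ x, x ∈ l → x ∉ l') ∧
        (∀ v : V, ∃ l ∈ P, v ∈ l)} =
      Fintype.card V -
        sSup {k : ℕ | ∃ M : Finset (V × V), M.card = k ∧
          (∀ p ∈ M, r p.1 p.2) ∧
          (∀ p ∈ M, ∀ q ∈ M, p.1 = q.1 → p = q) ∧
          (∀ p ∈ M, ∀ q ∈ M, p.2 = q.2 → p = q)} := by
  classical
  set n : ℕ := Fintype.card V with hn
  set SP : Set ℕ := {k : ℕ | ∃ P : Finset (List V), P.card = k ∧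
      (∀ l ∈ P, l ≠ [] ∧ l.Chain' r ∧ l.Nodup) ∧
      (∀ l ∈ P, ∀ l' ∈ P, l ≠ l' → ∀ x, x ∈ l → x ∉ l') ∧
      (∀ v : V, ∃ l ∈ P, v ∈ l)} with hSP
  set SM : Set ℕ := {k : ℕ | ∃ M : Finset (V × V), M.card = k ∧
      (∀ p ∈ M, r p.1 p.2) ∧
      (∀ p ∈ M, ∀ q ∈ M, p.1 = q.1 → p = q) ∧
      (∀ p ∈ M, ∀ q ∈ M, p.2 = q.2 → p = q)} with hSM
  have hSPne : SP.Nonempty := by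
    refine ⟨n, Finset.univ.image (fun v : V => [v]), ?_, ?_, ?_, ?_⟩
    · rw [Finset.card_image_of_injective _ (fun a b h => by simpa using h),
        Finset.card_univ]
    · intro l hl
      obtain ⟨v, _, rfl⟩ := Finset.mem_image.mp hl
      simp [List.Chain']
    · intro l hl l' hl' hne x hx hx'
      obtain ⟨v, _, rfl⟩ := Finset.mem_image.mp hl
      obtain ⟨v', _, rfl⟩ := Finset.mem_image.mp hl'
      simp only [List.mem_singleton] at hx hx'
      exact hne (by rw [← hx, hx'])
    · intro v
      exact ⟨[v], Finset.mem_image.mpr ⟨v, Finset.mem_univ v, rfl⟩, List.mem_singleton_self v⟩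
  have hSMne : SM.Nonempty := ⟨0, ∅, by simp, by simp, by simp, by simp⟩
  have hSMbdd : BddAbove SM := by
    refine ⟨n, fun k hk => ?_⟩
    obtain ⟨M, hMcard, _, hfst, _⟩ := hk
    rw [← hMcard, ← Finset.card_image_of_injOn hfst]
    exact le_trans (Finset.card_le_univ _) (le_of_eq (Finset.card_univ))
  obtain ⟨Mmax, hMcard, hMr, hMfst, hMsnd⟩ := Nat.sSup_mem hSMne hSMbdd
  obtain ⟨Pmin, hPcard, hP1, hP2, hP3⟩ := Nat.sInf_mem hSPne
  -- from the minimum path cover, get a matching of size n - sInf SP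
  obtain ⟨M', hM'card, hM'r, hM'fst, hM'snd⟩ := matching_of_cover hP1 hP2 hP3
  have hle1 : n - sInf SP ≤ sSup SM := by
    rw [← hPcard]
    exact le_csSup hSMbdd ⟨M', hM'card.trans (by rw [hPcard]), hM'r, hM'fst, hM'snd⟩
  -- from the maximum matching, get a path cover of size n - sSup SM
  obtain ⟨P', hP'card, hP'1, hP'2, hP'3⟩ := cover_of_matching hacyc hMr hMfst hMsnd
  have hle2 : sInf SP ≤ n - sSup SM := by
    rw [← hMcard]
    exact Nat.sInf_le ⟨P', hP'card, hP'1, hP'2, hP'3⟩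
  omega
end

section
/- For a homogeneous team: given attacks (z_1,t_1),...,(z_n,t_n) sorted by time and defender speed v, a single defender can thwart a subsequence of attacks j_1 < j_2 < ... < j_k if and only if dist(z_{j_i}, z_{j_{i+1}}) ≤ v·(t_{j_{i+1}} - t_{j_i}) for all consecutive pairs. Consequently, the minimum number of speed-v defenders needed to thwart all n attacks equals the minimum number of directed paths covering the DAG with vertices {1,...,n} and edges j→j' (j<j') whenever dist(z_j, z_{j'}) ≤ v·(t_{j'} - t_j). -/
private lemma consec_to_pairwise {k : ℕ} (r : Fin k → Fin k → Prop)
    (hrefl : ∀ i, r i i) (htrans : ∀ a b c, r a b → r b c → r a c)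
    (hcons : ∀ (i : ℕ) (h : i + 1 < k), r ⟨i, Nat.lt_of_succ_lt h⟩ ⟨i + 1, h⟩) :
    ∀ i i' : Fin k, i ≤ i' → r i i' := by
  intro i i' h
  obtain ⟨d, hd⟩ := Nat.exists_eq_add_of_le (show (i : ℕ) ≤ i' from h)
  clear h
  induction d generalizing i' with
  | zero => have : i = i' := Fin.ext (by omega); subst this; exact hrefl i
  | succ d ih =>
    have hm : (i : ℕ) + d + 1 < k := hd ▸ i'.isLt
    have h1 : r i ⟨(i : ℕ) + d, Nat.lt_of_succ_lt hm⟩ := ih _ rfl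
    have h2 := hcons ((i : ℕ) + d) hm
    have : i' = ⟨(i : ℕ) + d + 1, hm⟩ := Fin.ext (by simp [hd]; omega)
    subst this
    exact htrans _ _ _ h1 h2

private lemma chain'_strengthen {α : Type*} {s r : α → α → Prop} :
    ∀ {l : List α}, l.Chain' s → (∀ a ∈ l, ∀ b ∈ l, s a b → r a b) → l.Chain' r
  | [], _, _ => List.isChain_nil
  | [_], _, _ => List.isChain_singleton _
  | a :: b :: tl, h, hp => by
    simp only [List.Chain', List.isChain_cons_cons] at h ⊢
    refine ⟨hp a (by simp) b (by simp) h.1, chain'_strengthen h.2 ?_⟩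
    intro x hx y hy hs
    exact hp x (by simp [hx]) y (by simp [hy]) hs

/-- Homogeneous team of speed-`v` defenders against attacks `(z j, t j)` sorted
by time. (1) A single defender can visit a strictly increasing subsequence of
attacks (i.e. all pairs are mutually reachable) iff all consecutive pairs are
reachable. (2) The minimum number of speed-`v` defenders needed to thwart all
attacks equals the minimum number of vertex-disjoint directed paths covering
the DAG on `{1,…,n}` with an edge `j → j'` (for `j < j'`) iff
`dist (z j) (z j') ≤ v (t j' - t j)`. -/
theorem homogeneous_defense {X : Type*} [MetricSpace X] (n : ℕ)
    (z : Fin n → X) (t : Fin n → ℝ) (hsort : Monotone t) (v : ℝ) (hv : 0 ≤ v) :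
    (∀ (k : ℕ) (j : Fin k → Fin n), StrictMono j →
      ((∀ i i' : Fin k, i ≤ i' →
          dist (z (j i)) (z (j i')) ≤ v * (t (j i') - t (j i))) ↔
        (∀ (i : ℕ) (h : i + 1 < k),
          dist (z (j ⟨i, Nat.lt_of_succ_lt h⟩)) (z (j ⟨i + 1, h⟩)) ≤
            v * (t (j ⟨i + 1, h⟩) - t (j ⟨i, Nat.lt_of_succ_lt h⟩))))) ∧
    sInf {m : ℕ | ∃ g : Fin n → Fin m, ∀ j j' : Fin n, j < j' → g j = g j' →
        dist (z j) (z j') ≤ v * (t j' - t j)} =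
      sInf {k : ℕ | ∃ P : Finset (List (Fin n)), P.card = k ∧
        (∀ l ∈ P, l ≠ [] ∧
          l.Chain' (fun a b => a < b ∧ dist (z a) (z b) ≤ v * (t b - t a))) ∧
        (∀ l ∈ P, ∀ l' ∈ P, l ≠ l' → ∀ x, x ∈ l → x ∉ l') ∧
        (∀ u : Fin n, ∃ l ∈ P, u ∈ l)} := by
  -- the edge relation and its transitivity
  set r : Fin n → Fin n → Prop :=
    fun a b => a < b ∧ dist (z a) (z b) ≤ v * (t b - t a) with hr
  have rtrans : ∀ a b c, r a b → r b c → r a c := by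
    intro a b c ⟨hab, dab⟩ ⟨hbc, dbc⟩
    refine ⟨hab.trans hbc, ?_⟩
    calc dist (z a) (z c) ≤ dist (z a) (z b) + dist (z b) (z c) := dist_triangle _ _ _
      _ ≤ v * (t b - t a) + v * (t c - t b) := add_le_add dab dbc
      _ = v * (t c - t a) := by ring
  constructor
  · -- part 1
    intro k j hj
    constructor
    · intro hall i h
      exact hall _ _ (by exact Fin.mk_le_mk.mpr (Nat.le_succ i))
    · intro hcons
      exact consec_to_pairwise
        (fun i i' => dist (z (j i)) (z (j i')) ≤ v * (t (j i') - t (j i)))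
        (fun i => by simp)
        (fun a b c hab hbc => by
          calc dist (z (j a)) (z (j c))
              ≤ dist (z (j a)) (z (j b)) + dist (z (j b)) (z (j c)) := dist_triangle _ _ _
            _ ≤ v * (t (j b) - t (j a)) + v * (t (j c) - t (j b)) := add_le_add hab hbc
            _ = v * (t (j c) - t (j a)) := by ring)
        hcons
  · -- part 2
    set A := {m : ℕ | ∃ g : Fin n → Fin m, ∀ j j' : Fin n, j < j' → g j = g j' →
        dist (z j) (z j') ≤ v * (t j' - t j)} with hA
    set B := {k : ℕ | ∃ P : Finset (List (Fin n)), P.card = k ∧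
        (∀ l ∈ P, l ≠ [] ∧ l.Chain' r) ∧
        (∀ l ∈ P, ∀ l' ∈ P, l ≠ l' → ∀ x, x ∈ l → x ∉ l') ∧
        (∀ u : Fin n, ∃ l ∈ P, u ∈ l)} with hB
    -- from a path cover of size k, build a coloring with k colors
    have BtoA : ∀ k ∈ B, k ∈ A := by
      rintro k ⟨P, hcard, hchain, hdisj, hcov⟩
      subst hcard
      choose f hfP hfmem using hcov
      refine ⟨fun u => P.equivFin ⟨f u, hfP u⟩, ?_⟩
      intro a b hab hgab
      have hsame : f a = f b := by
        have := P.equivFin.injective hgab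
        exact Subtype.ext_iff.mp this
      -- both a b in list f a, chain' r, use pairwise
      have hc : (f a).Chain' r := (hchain _ (hfP a)).2
      haveI : IsTrans (Fin n) r := ⟨fun a b c => rtrans a b c⟩
      have hpw : (f a).Pairwise r := List.isChain_iff_pairwise.mp hc
      have hpw' : (f a).Pairwise (fun x y => r x y ∨ r y x) :=
        hpw.imp (fun h => Or.inl h)
      haveI : Std.Symm (fun x y => r x y ∨ r y x) := ⟨fun x y h => h.symm⟩
      have hor := hpw'.forall (hfmem a)
        (hsame ▸ hfmem b) (ne_of_lt hab)
      rcases hor with h | h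
      · exact h.2
      · exact absurd h.1 (not_lt_of_gt hab)
    -- from a coloring with m colors, build a path cover of size ≤ m
    have AtoB : ∀ m ∈ A, ∃ k ∈ B, k ≤ m := by
      rintro m ⟨g, hg⟩
      classical
      set L : Fin m → List (Fin n) :=
        fun c => (Finset.univ.filter (fun u => g u = c)).sort (· ≤ ·) with hL
      have hmemL : ∀ c u, u ∈ L c ↔ g u = c := by
        intro c u; simp [hL, Finset.mem_sort]
      set P : Finset (List (Fin n)) :=
        (Finset.univ.filter (fun c : Fin m => ∃ u, g u = c)).image L with hP
      refine ⟨P.card, ⟨P, rfl, ?_, ?_, ?_⟩, ?_⟩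
      · rintro l hl
        simp only [hP, Finset.mem_image, Finset.mem_filter] at hl
        obtain ⟨c, ⟨-, u, hu⟩, rfl⟩ := hl
        constructor
        · intro hnil
          have := (hmemL c u).mpr hu
          rw [hnil] at this; simp at this
        · have hs : (L c).Chain' (· < ·) :=
            ((Finset.sortedLT_sort _).pairwise.isChain)
          refine chain'_strengthen hs ?_
          intro a ha b hb hab
          refine ⟨hab, hg a b hab ?_⟩
          rw [(hmemL c a).mp ha, (hmemL c b).mp hb]
      · rintro l hl l' hl' hne x hx hx'
        simp only [hP, Finset.mem_image, Finset.mem_filter] at hl hl'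
        obtain ⟨c, -, rfl⟩ := hl
        obtain ⟨c', -, rfl⟩ := hl'
        have h1 := (hmemL c x).mp hx
        have h2 := (hmemL c' x).mp hx'
        exact hne (by rw [h1.symm.trans h2])
      · intro u
        refine ⟨L (g u), ?_, (hmemL _ u).mpr rfl⟩
        simp only [hP, Finset.mem_image, Finset.mem_filter]
        exact ⟨g u, ⟨Finset.mem_univ _, u, rfl⟩, rfl⟩
      · calc P.card ≤ (Finset.univ.filter (fun c : Fin m => ∃ u, g u = c)).card :=
            Finset.card_image_le
          _ ≤ Finset.univ.card := Finset.card_filter_le _ _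
          _ = m := Finset.card_fin m
    -- both sets nonempty
    have hBne : B.Nonempty := by
      have : n ∈ A := ⟨fun u => u, fun a b hab hgab => absurd hgab (ne_of_lt hab)⟩
      obtain ⟨k, hk, -⟩ := AtoB n this
      exact ⟨k, hk⟩
    have hAne : A.Nonempty :=
      ⟨n, fun u => u, fun a b hab hgab => absurd hgab (ne_of_lt hab)⟩
    apply le_antisymm
    · exact Nat.sInf_le (BtoA _ (Nat.sInf_mem hBne))
    · obtain ⟨k, hk, hle⟩ := AtoB _ (Nat.sInf_mem hAne)
      exact le_trans (Nat.sInf_le hk) hle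
end
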